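/- For any k ≥ 1 there exist δ₁ > 0 and L₁ > 0, depending only on k, such that the following holds. Let E, E' ⊂ B be k-dimensional subspaces with d_H(E, E') ≤ δ₁, let F be a closed complement to E with |π_{E⊕F}| ≤ √k, and let {v_1, …, v_k} be a basis of E consisting of unit vectors; assume δ₁ is small enough that B = E' ⊕ F, and set v'_i = (π_{E'⊕F} v_i)/|π_{E'⊕F} v_i|. Then: (1) N[v'_1, …, v'_k] ≤ 2k · N[v_1, …, v_k]; and (2) | log ( m_E P[v_1, …, v_k] / m_{E'} P[v'_1, …, v'_k] ) | ≤ L₁ · d_H(E, E'). -/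

import Mathlib

open MeasureTheory Filter Metric Module Submodule Set

noncomputable section

namespace BY

variable {B B' : Type*}

/-- The unit sphere of a subspace `E`. -/
def subSphere [NormedAddCommGroup B] [NormedSpace ℝ B] (E : Submodule ℝ B) : Set B :=
  {v : B | v ∈ E ∧ ‖v‖ = 1}

/-- `d_H(E, E')`: the Hausdorff distance between the unit spheres of `E` and `E'`. -/
def dH [NormedAddCommGroup B] [NormedSpace ℝ B] (E E' : Submodule ℝ B) : ℝ :=
  Metric.hausdorffDist (subSphere E) (subSphere E')

/-- The supremum of `‖π x‖` over `x ∈ S`, where `π` is the projection onto `E` along `F`. -/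
def projNormOn [NormedAddCommGroup B] [NormedSpace ℝ B] (E F : Submodule ℝ B)
    (h : IsCompl E F) (S : Set B) : ℝ :=
  sSup ((fun x => ‖(E.linearProjOfIsCompl F h x : B)‖) '' S)

/-- `|π_{E⊕F}|`: the operator norm of the projection onto `E` along `F`. -/
def projNorm [NormedAddCommGroup B] [NormedSpace ℝ B] (E F : Submodule ℝ B)
    (h : IsCompl E F) : ℝ :=
  projNormOn E F h (Metric.closedBall 0 1)

/-- `α(E, F) = inf { ‖e - f‖ : e ∈ E, ‖e‖ = 1, f ∈ F }`. -/
def alphaAngle [NormedAddCommGroup B] [NormedSpace ℝ B] (E F : Submodule ℝ B) : ℝ :=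
  sInf {r : ℝ | ∃ e ∈ E, ∃ f ∈ F, ‖e‖ = 1 ∧ r = ‖e - f‖}

/-- `ω_k`: the volume of the Euclidean unit ball in `ℝ^k`. -/
def euclideanBallVol (k : ℕ) : ENNReal :=
  volume (Metric.closedBall (0 : EuclideanSpace ℝ (Fin k)) 1)

/-- `μ` is the induced volume `m_E` on the `k`-dimensional subspace `E`: the (unique) Haar
measure on `E` assigning mass `ω_k` to the unit ball of `E`. -/
def IsInducedVolume [NormedAddCommGroup B] [NormedSpace ℝ B] [MeasurableSpace B]
    (E : Submodule ℝ B) (k : ℕ) (μ : Measure E) : Prop :=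
  Measure.IsAddHaarMeasure μ ∧ μ {v : E | ‖v‖ ≤ 1} = euclideanBallVol k

/-- `det(A|E)`, computed with respect to induced volumes `μE` on `E` and `μF` on a
subspace `F` containing `A(E)`: the ratio `μF(A(B_E)) / μE(B_E)` where `B_E` is
the unit ball of `E`. -/
def detIn [NormedAddCommGroup B] [NormedSpace ℝ B] [NormedAddCommGroup B'] [NormedSpace ℝ B']
    [MeasurableSpace B] [MeasurableSpace B']
    (A : B →L[ℝ] B') (E : Submodule ℝ B) (F : Submodule ℝ B')
    (μE : Measure E) (μF : Measure F) : ℝ :=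
  (μF {w : F | ∃ v : B, v ∈ E ∧ ‖v‖ ≤ 1 ∧ A v = (w : B')}).toReal /
    (μE {v : E | ‖v‖ ≤ 1}).toReal

/-- `P[v₁, …, v_k]`: the parallelepiped spanned by the vectors `v i`. -/
def pped [AddCommGroup B] [Module ℝ B] {k : ℕ} (v : Fin k → B) : Set B :=
  {x : B | ∃ a : Fin k → ℝ, (∀ i, a i ∈ Set.Icc (0 : ℝ) 1) ∧ x = ∑ i, a i • v i}

/-- `N[v₁, …, v_k]`: the sum of the norms of the projections, within the span of the `v i`,
onto each `⟨v i⟩` along the span of the other basis vectors. -/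
def Nquan [NormedAddCommGroup B] [NormedSpace ℝ B] {k : ℕ} (v : Fin k → B) : ℝ :=
  ∑ i, sSup {r : ℝ | ∃ a : Fin k → ℝ, ‖∑ j, a j • v j‖ ≤ 1 ∧ r = ‖a i • v i‖}

/-- The operator norm of the restriction of `A` to the subspace `E`. -/
def opNormOnSub [NormedAddCommGroup B] [NormedSpace ℝ B] [NormedAddCommGroup B']
    [NormedSpace ℝ B'] (A : B →L[ℝ] B') (E : Submodule ℝ B) : ℝ :=
  sSup {r : ℝ | ∃ v ∈ E, ‖v‖ ≤ 1 ∧ r = ‖A v‖}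

/-- The `n`-th iterate (`n ∈ ℤ`) of the invertible pair `(f, g)`, `g = f⁻¹`. -/
def zIter {X : Type*} (f g : X → X) (n : ℤ) (x : X) : X :=
  if 0 ≤ n then f^[n.toNat] x else g^[(-n).toNat] x

/-- `ψ'(x) = sup_{n ∈ ℤ} e^{-|n| δ} ψ(f^n x)`. -/
def psiSup {X : Type*} (f g : X → X) (ψ : X → ℝ) (δ : ℝ) (x : X) : ℝ :=
  sSup (Set.range fun n : ℤ => Real.exp (-|(n : ℝ)| * δ) * ψ (zIter f g n x))

/-- The cocycle `T^n_x = T_{f^{n-1} x} ∘ ⋯ ∘ T_x`. -/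
def cocycle {X : Type*} [NormedAddCommGroup B] [NormedSpace ℝ B]
    (f : X → X) (T : X → B →L[ℝ] B) : ℕ → X → B →L[ℝ] B
  | 0, _ => ContinuousLinearMap.id ℝ B
  | n + 1, x => (cocycle f T n (f x)).comp (T x)

end BY

end

/-!
Write `π`, `π'` for the projections onto `E`, `E'` along `F`, and `d = d_H(E, E')`. A unit vector
of `E'` lies within `d` of a unit vector of `E`, which `π` fixes, so `‖x - π x‖ ≤ (1 + √k) d ‖x‖`
on `E'`. Since `x - π' x ∈ F` is killed by `π`, this bounds `|π'| ≤ 2√k`, and the same argument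
with `E` and `E'` exchanged gives `‖x - π' x‖ ≤ ε ‖x‖` on `E`, where `ε = (1 + 2√k) d ≤ 1/3`.
So `π'` changes norms on `E` by a factor in `[1 - ε, 1 + ε]`, and both claims hold for any such
near-isometry.

(1) As `∑ aᵢ v'ᵢ = π' (∑ (aᵢ / ‖π' vᵢ‖) vᵢ)`, each coefficient functional of `v'` is bounded by
`(1 + ε) / (1 - ε) ≤ 2` times the corresponding one of `v`.

(2) In coordinates `m_E P[v] = ω_k / vol {a : ‖∑ aᵢ vᵢ‖ ≤ 1}`, so the volume ratio is a ratio of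
Lebesgue volumes of two such coordinate balls. Up to the diagonal rescaling by the factors
`‖π' vᵢ‖ ∈ [1 - ε, 1 + ε]`, these balls are nested within the factors `1 ± ε`, so the logarithm
of the ratio is at most `k log ((1 + ε) / (1 - ε)) ≤ 3kε`.
-/

open scoped Pointwise

theorem LinearIndependent.exists_norm_le_mul_norm_sum {B : Type*} [NormedAddCommGroup B]
    [NormedSpace ℝ B] {k : ℕ} {w : Fin k → B} (hw : LinearIndependent ℝ w) :
    ∃ C > 0, ∀ a : Fin k → ℝ, ‖a‖ ≤ C * ‖∑ i, a i • w i‖ := by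
  obtain ⟨K, hK0, hK⟩ := (Fintype.linearCombination ℝ w).exists_antilipschitzWith
    (LinearMap.ker_eq_bot.mpr (linearIndependent_iff_injective_fintypeLinearCombination.mp hw))
  refine ⟨K, hK0, fun a => ?_⟩
  simpa [Fintype.linearCombination_apply] using hK.le_mul_norm_sub a 0

theorem Real.abs_log_div_le_of_le_of_le {x y q : ℝ} {k : ℕ} (hy : 0 < y) (hq : 0 < q)
    (hlo : (q ^ k)⁻¹ * y ≤ x) (hhi : x ≤ q ^ k * y) : |Real.log (x / y)| ≤ k * Real.log q := by
  have hx : 0 < x := lt_of_lt_of_le (by positivity) hlo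
  rw [abs_le, ← Real.log_pow, ← Real.log_inv]
  exact ⟨Real.log_le_log (by positivity) ((le_div_iff₀ hy).mpr hlo),
    Real.log_le_log (div_pos hx hy) ((div_le_iff₀ hy).mpr hhi)⟩

theorem Real.log_one_add_div_one_sub_le {ε : ℝ} (hε0 : 0 ≤ ε) (hε : ε ≤ 1 / 3) :
    Real.log ((1 + ε) / (1 - ε)) ≤ 3 * ε := by
  have h1ε : 0 < 1 - ε := by linarith
  calc Real.log ((1 + ε) / (1 - ε)) ≤ (1 + ε) / (1 - ε) - 1 :=
        Real.log_le_sub_one_of_pos (by positivity)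
    _ ≤ 3 * ε := by rw [div_sub_one h1ε.ne', div_le_iff₀ h1ε]; nlinarith

namespace BY

variable {B : Type*} [NormedAddCommGroup B] [NormedSpace ℝ B] {k : ℕ}

theorem norm_projection_le_of_projNorm_le {E F : Submodule ℝ B} [FiniteDimensional ℝ E]
    (hF : IsClosed (F : Set B)) (h : IsCompl E F) {M : ℝ} (hM : projNorm E F h ≤ M) (x : B) :
    ‖E.projection F h x‖ ≤ M * ‖x‖ := by
  -- `π` is continuous, so `projNorm` is its operator norm rather than the `sSup` of an unbounded set
  have hT : E.IsTopCompl F := (h.symm.isTopCompl_of_isClosed_of_finiteDimensional hF).symm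
  have hnorm : projNorm E F h = ‖E.projectionL F hT‖ :=
    (E.projectionL F hT).sSup_unitClosedBall_eq_norm
  calc ‖E.projection F h x‖ = ‖E.projectionL F hT x‖ := rfl
    _ ≤ ‖E.projectionL F hT‖ * ‖x‖ := (E.projectionL F hT).le_opNorm x
    _ ≤ M * ‖x‖ := by rw [← hnorm]; gcongr

theorem subSphere_eq_image (E : Submodule ℝ B) :
    subSphere E = Subtype.val '' sphere (0 : E) 1 := by
  ext x
  simp [subSphere, and_comm]

theorem isCompact_subSphere (E : Submodule ℝ B) [FiniteDimensional ℝ E] :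
    IsCompact (subSphere E) := by
  rw [subSphere_eq_image]
  exact (isCompact_sphere 0 1).image continuous_subtype_val

theorem subSphere_nonempty {E : Submodule ℝ B} (hE : E ≠ ⊥) : (subSphere E).Nonempty := by
  obtain ⟨x, hxE, hx0⟩ := Submodule.exists_mem_ne_zero_of_ne_bot hE
  exact ⟨‖x‖⁻¹ • x, E.smul_mem _ hxE, norm_smul_inv_norm hx0⟩

theorem dH_comm (E E' : Submodule ℝ B) : dH E E' = dH E' E := hausdorffDist_comm

theorem dH_nonneg (E E' : Submodule ℝ B) : 0 ≤ dH E E' := hausdorffDist_nonneg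

theorem exists_mem_subSphere_norm_sub_le_dH {E E' : Submodule ℝ B} [FiniteDimensional ℝ E]
    [FiniteDimensional ℝ E'] (hEE' : finrank ℝ E = finrank ℝ E') {x : B}
    (hx : x ∈ subSphere E) : ∃ y ∈ subSphere E', ‖x - y‖ ≤ dH E E' := by
  have hE' : E' ≠ ⊥ := by
    rintro rfl
    rw [finrank_bot, Submodule.finrank_eq_zero] at hEE'
    obtain ⟨hxE, hx1⟩ := hx
    rw [hEE', Submodule.mem_bot] at hxE
    simp [hxE] at hx1
  have hne' := subSphere_nonempty hE'
  obtain ⟨y, hy, hyd⟩ := (isCompact_subSphere E').exists_infDist_eq_dist hne' x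
  refine ⟨y, hy, ?_⟩
  rw [← dist_eq_norm, ← hyd]
  exact infDist_le_hausdorffDist_of_mem hx (hausdorffEDist_ne_top_of_nonempty_of_bounded ⟨x, hx⟩
    hne' (isCompact_subSphere E).isBounded (isCompact_subSphere E').isBounded)

theorem norm_map_le_mul_norm_of_norm_eq_one {X : Submodule ℝ B} {T : B →ₗ[ℝ] B} {C : ℝ}
    (hT : ∀ x ∈ X, ‖x‖ = 1 → ‖T x‖ ≤ C) {x : B} (hx : x ∈ X) : ‖T x‖ ≤ C * ‖x‖ := by
  rcases eq_or_ne x 0 with rfl | hx0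
  · simp
  have hu := hT (‖x‖⁻¹ • x) (X.smul_mem _ hx) (norm_smul_inv_norm hx0)
  rw [map_smul, norm_smul, norm_inv, norm_norm, inv_mul_le_iff₀ (norm_pos_iff.mpr hx0)] at hu
  linarith

theorem norm_sub_projection_le_dH {E X F : Submodule ℝ B} [FiniteDimensional ℝ E]
    [FiniteDimensional ℝ X] (hXE : finrank ℝ X = finrank ℝ E) (h : IsCompl E F) {M : ℝ}
    (hM : ∀ x, ‖E.projection F h x‖ ≤ M * ‖x‖) {x : B} (hx : x ∈ X) :
    ‖x - E.projection F h x‖ ≤ (1 + M) * dH X E * ‖x‖ := by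
  rw [← projection_eq_self_sub_projection h]
  refine norm_map_le_mul_norm_of_norm_eq_one (fun x hx hx1 => ?_) hx
  obtain ⟨y, hy, hxy⟩ := exists_mem_subSphere_norm_sub_le_dH hXE ⟨hx, hx1⟩
  have hM0 : 0 ≤ M := by simpa [hx1] using (norm_nonneg _).trans (hM x)
  calc ‖F.projection E h.symm x‖ = ‖F.projection E h.symm (x - y)‖ := by
        rw [map_sub, projection_apply_of_mem_right h.symm hy.1, sub_zero]
    _ ≤ ‖x - y‖ + M * ‖x - y‖ := by
        rw [projection_eq_self_sub_projection h]
        exact (norm_sub_le _ _).trans (add_le_add_right (hM _) _)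
    _ ≤ (1 + M) * dH X E := by nlinarith

theorem norm_projection_le_two_mul {E E' F : Submodule ℝ B} (h : IsCompl E F) (h' : IsCompl E' F)
    {s : ℝ} (hs : ∀ x, ‖E.projection F h x‖ ≤ s * ‖x‖)
    (hnear : ∀ x ∈ E', ‖x - E.projection F h x‖ ≤ ‖x‖ / 2) (x : B) :
    ‖E'.projection F h' x‖ ≤ 2 * s * ‖x‖ := by
  set e := E'.projection F h' x
  have hπe : E.projection F h e = E.projection F h x := by
    rw [← sub_eq_zero, ← map_sub, projection_apply_eq_zero_iff, ← neg_mem_iff, neg_sub]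
    exact sub_projection_mem h' x
  have h1 : ‖e‖ ≤ ‖E.projection F h x‖ + ‖e - E.projection F h x‖ := hπe ▸ norm_le_insert' _ _
  have h2 : ‖e - E.projection F h x‖ ≤ ‖e‖ / 2 := hπe ▸ hnear e (projection_apply_mem h' x)
  linarith [hs x]

theorem norm_sub_projection_le_of_projNorm_le {E E' F : Submodule ℝ B} [FiniteDimensional ℝ E]
    [FiniteDimensional ℝ E'] (hEE' : finrank ℝ E = finrank ℝ E') (hF : IsClosed (F : Set B))
    (h : IsCompl E F) (h' : IsCompl E' F) {s : ℝ} (hs : projNorm E F h ≤ s)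
    (hd : (1 + s) * dH E E' ≤ 1 / 2) {x : B} (hx : x ∈ E) :
    ‖x - E'.projection F h' x‖ ≤ (1 + 2 * s) * dH E E' * ‖x‖ := by
  have hP := norm_projection_le_of_projNorm_le hF h hs
  have hP' := norm_projection_le_two_mul h h' hP fun y hy =>
    (norm_sub_projection_le_dH hEE'.symm h hP hy).trans (by
      rw [dH_comm]
      linarith [mul_le_mul_of_nonneg_right hd (norm_nonneg y)])
  exact norm_sub_projection_le_dH hEE' h' hP' hx

def coordBall (w : Fin k → B) : Set (Fin k → ℝ) := {a | ‖∑ i, a i • w i‖ ≤ 1}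

theorem volume_coordBall_pos (w : Fin k → B) : 0 < volume (coordBall w) := by
  have hcont : Continuous fun a : Fin k → ℝ => ∑ i, a i • w i := by fun_prop
  have hball : coordBall w = (fun a => ∑ i, a i • w i) ⁻¹' closedBall 0 1 := by
    ext a
    simp [coordBall]
  rw [hball]
  refine volume.measure_pos_of_mem_nhds (x := 0) (hcont.continuousAt.preimage_mem_nhds ?_)
  simpa using closedBall_mem_nhds (0 : B) one_pos

theorem volume_coordBall_lt_top {w : Fin k → B} (hw : LinearIndependent ℝ w) :
    volume (coordBall w) < ⊤ := by
  obtain ⟨C, hC0, hC⟩ := hw.exists_norm_le_mul_norm_sum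
  refine (measure_mono fun a (ha : ‖_‖ ≤ 1) => ?_).trans_lt
    (measure_closedBall_lt_top (x := 0) (r := C))
  rw [mem_closedBall_zero_iff]
  exact (hC a).trans (mul_le_of_le_one_right hC0.le ha)

theorem volume_real_coordBall_pos {w : Fin k → B} (hw : LinearIndependent ℝ w) :
    0 < volume.real (coordBall w) :=
  ENNReal.toReal_pos (volume_coordBall_pos w).ne' (volume_coordBall_lt_top hw).ne

theorem coordBall_subset_smul {w w' : Fin k → B} {c : ℝ} (hc : 0 < c)
    (h : ∀ a : Fin k → ℝ, c * ‖∑ i, a i • w i‖ ≤ ‖∑ i, a i • w' i‖) :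
    coordBall w' ⊆ c⁻¹ • coordBall w := by
  intro a ha
  rw [mem_smul_set_iff_inv_smul_mem₀ (inv_ne_zero hc.ne'), inv_inv]
  have : ∑ i, (c • a) i • w i = c • ∑ i, a i • w i := by
    simp [Finset.smul_sum, smul_smul]
  change ‖∑ i, (c • a) i • w i‖ ≤ 1
  rw [this, norm_smul, Real.norm_of_nonneg hc.le]
  exact (h a).trans ha

theorem volume_real_coordBall_le {w w' : Fin k → B} (hw : LinearIndependent ℝ w) {c : ℝ}
    (hc : 0 < c) (h : ∀ a : Fin k → ℝ, c * ‖∑ i, a i • w i‖ ≤ ‖∑ i, a i • w' i‖) :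
    volume.real (coordBall w') ≤ c⁻¹ ^ k * volume.real (coordBall w) := by
  have hsmul : volume (c⁻¹ • coordBall w) = ENNReal.ofReal (c⁻¹ ^ k) * volume (coordBall w) := by
    rw [Measure.addHaar_smul_of_nonneg _ (inv_nonneg.mpr hc.le), finrank_fin_fun]
  rw [measureReal_def, measureReal_def, ← ENNReal.toReal_ofReal (by positivity : 0 ≤ c⁻¹ ^ k),
    ← ENNReal.toReal_mul, ← hsmul]
  exact ENNReal.toReal_mono (hsmul ▸ ENNReal.mul_ne_top ENNReal.ofReal_ne_top
    (volume_coordBall_lt_top hw).ne) (measure_mono (coordBall_subset_smul hc h))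

theorem coordBall_smul (c : Fin k → ℝ) (w : Fin k → B) :
    coordBall (c • w) = Matrix.toLin' (Matrix.diagonal c) ⁻¹' coordBall w := by
  ext a
  simp [coordBall, Matrix.mulVec_diagonal, smul_smul, mul_comm]

theorem volume_real_coordBall_smul {c : Fin k → ℝ} (hc : ∀ i, c i ≠ 0) (w : Fin k → B) :
    volume.real (coordBall (c • w)) = |∏ i, c i|⁻¹ * volume.real (coordBall w) := by
  have hdet : LinearMap.det (Matrix.toLin' (Matrix.diagonal c)) = ∏ i, c i := by
    rw [LinearMap.det_toLin', Matrix.det_diagonal]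
  rw [measureReal_def, coordBall_smul, Measure.addHaar_preimage_linearMap _
    (hdet ▸ Finset.prod_ne_zero_iff.mpr fun i _ => hc i), hdet, ENNReal.toReal_mul,
    ENNReal.toReal_ofReal (by positivity), abs_inv, measureReal_def]

theorem measure_pped_mul_volume_coordBall [MeasurableSpace B] [BorelSpace B]
    {E : Submodule ℝ B} [FiniteDimensional ℝ E] (hE : finrank ℝ E = k) {μ : Measure E}
    (hμ : IsInducedVolume E k μ) {w : Fin k → B} (hwE : ∀ i, w i ∈ E)
    (hw : LinearIndependent ℝ w) :
    μ (Subtype.val ⁻¹' pped w) * volume (coordBall w) = euclideanBallVol k := by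
  have : μ.IsAddHaarMeasure := hμ.1
  let b : Basis (Fin k) ℝ E := basisOfLinearIndependentOfCardEqFinrank' (fun i => ⟨w i, hwE i⟩)
    (.of_comp E.subtype hw) (by simp [hE])
  have hb (a : Fin k → ℝ) : ((b.equivFun.symm a : E) : B) = ∑ i, a i • w i := by
    simp [b, Basis.equivFun_symm_apply]
  let e := b.equivFunL.toHomeomorph.toMeasurableEquiv
  have hsum (u : E) : ∑ i, e u i • w i = u := by
    rw [← hb]; simp [e]
  have hcoord (u : E) (a : Fin k → ℝ) (hua : (u : B) = ∑ i, a i • w i) : e u = a := by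
    rw [← hb, Subtype.val_inj] at hua
    rw [hua]
    exact b.equivFun.apply_symm_apply a
  -- in the coordinates of `w`, `μ` is a multiple of Lebesgue measure, and the cube has volume `1`
  let ν := μ.map e
  have : ν.IsAddHaarMeasure := b.equivFunL.isAddHaarMeasure_map μ
  have hν : ν = ν.addHaarScalarFactor volume • volume :=
    Measure.isAddLeftInvariant_eq_smul ν volume
  have hcube : Subtype.val ⁻¹' pped w = e ⁻¹' univ.pi fun _ => Icc 0 1 := by
    ext u
    refine ⟨fun ⟨a, ha, hua⟩ => ?_, fun hu => ⟨e u, mem_univ_pi.mp hu, (hsum u).symm⟩⟩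
    rwa [mem_preimage, hcoord u a hua, mem_univ_pi]
  have hball : {u : E | ‖u‖ ≤ 1} = e ⁻¹' coordBall w := by
    ext u
    simp only [mem_preimage, coordBall, mem_ofPred_eq, hsum, Submodule.norm_coe]
  rw [← hμ.2, hball, hcube, ← MeasurableEquiv.map_apply, ← MeasurableEquiv.map_apply]
  change ν _ * _ = ν _
  rw [hν]
  simp [Real.volume_Icc_pi]

theorem euclideanBallVol_toReal_pos (k : ℕ) : 0 < (euclideanBallVol k).toReal :=
  ENNReal.toReal_pos (measure_closedBall_pos _ _ one_pos).ne' measure_closedBall_lt_top.ne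

theorem toReal_measure_pped [MeasurableSpace B] [BorelSpace B]
    {E : Submodule ℝ B} [FiniteDimensional ℝ E] (hE : finrank ℝ E = k) {μ : Measure E}
    (hμ : IsInducedVolume E k μ) {w : Fin k → B} (hwE : ∀ i, w i ∈ E)
    (hw : LinearIndependent ℝ w) :
    (μ (Subtype.val ⁻¹' pped w)).toReal =
      (euclideanBallVol k).toReal / volume.real (coordBall w) := by
  rw [eq_div_iff (volume_real_coordBall_pos hw).ne', measureReal_def, ← ENNReal.toReal_mul,
    measure_pped_mul_volume_coordBall hE hμ hwE hw]

theorem toReal_measure_pped_div [MeasurableSpace B] [BorelSpace B]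
    {E E' : Submodule ℝ B} [FiniteDimensional ℝ E] [FiniteDimensional ℝ E']
    (hE : finrank ℝ E = k) (hE' : finrank ℝ E' = k) {μ : Measure E} {μ' : Measure E'}
    (hμ : IsInducedVolume E k μ) (hμ' : IsInducedVolume E' k μ') {w w' : Fin k → B}
    (hwE : ∀ i, w i ∈ E) (hw'E : ∀ i, w' i ∈ E') (hw : LinearIndependent ℝ w)
    (hw' : LinearIndependent ℝ w') :
    (μ (Subtype.val ⁻¹' pped w)).toReal / (μ' (Subtype.val ⁻¹' pped w')).toReal =
      volume.real (coordBall w') / volume.real (coordBall w) := by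
  rw [toReal_measure_pped hE hμ hwE hw, toReal_measure_pped hE' hμ' hw'E hw',
    div_div_div_cancel_left' _ _ (euclideanBallVol_toReal_pos k).ne']

def coordProjNorms (v : Fin k → B) (i : Fin k) : Set ℝ :=
  {r | ∃ a : Fin k → ℝ, ‖∑ j, a j • v j‖ ≤ 1 ∧ r = ‖a i • v i‖}

theorem Nquan_eq_sum (v : Fin k → B) : Nquan v = ∑ i, sSup (coordProjNorms v i) := rfl

theorem Nquan_nonneg (v : Fin k → B) : 0 ≤ Nquan v :=
  Finset.sum_nonneg fun _ _ => Real.sSup_nonneg fun _ ⟨_, _, hr⟩ => hr ▸ norm_nonneg _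

theorem bddAbove_coordProjNorms {v : Fin k → B} (hv : LinearIndependent ℝ v) (i : Fin k) :
    BddAbove (coordProjNorms v i) := by
  obtain ⟨C, hC0, hC⟩ := hv.exists_norm_le_mul_norm_sum
  refine ⟨C * ‖v i‖, ?_⟩
  rintro - ⟨a, ha, rfl⟩
  rw [norm_smul]
  gcongr
  exact (norm_le_pi_norm a i).trans ((hC a).trans (mul_le_of_le_one_right hC0.le ha))

noncomputable def normalizedImage (T : B →ₗ[ℝ] B) (v : Fin k → B) : Fin k → B :=
  fun i => ‖T (v i)‖⁻¹ • T (v i)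

theorem volume_real_coordBall_normalizedImage {T : B →ₗ[ℝ] B} {v : Fin k → B}
    (hn : ∀ i, T (v i) ≠ 0) :
    volume.real (coordBall (normalizedImage T v)) =
      (∏ i, ‖T (v i)‖) * volume.real (coordBall (T ∘ v)) := by
  set n : Fin k → ℝ := fun i => ‖T (v i)‖
  rw [show normalizedImage T v = n⁻¹ • (T ∘ v) from rfl,
    volume_real_coordBall_smul (c := n⁻¹) fun i => inv_ne_zero (norm_ne_zero_iff.mpr (hn i)),
    Pi.inv_def,
    Finset.prod_inv_distrib, abs_inv, inv_inv,
    abs_of_nonneg (Finset.prod_nonneg fun i _ => norm_nonneg _)]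

section NearIdentity

variable {E : Submodule ℝ B} {T : B →ₗ[ℝ] B} {ε : ℝ}

theorem one_sub_mul_norm_le_norm_map (hT : ∀ x ∈ E, ‖x - T x‖ ≤ ε * ‖x‖) {x : B} (hx : x ∈ E) :
    (1 - ε) * ‖x‖ ≤ ‖T x‖ := by
  have := norm_sub_norm_le x (T x)
  linarith [hT x hx]

theorem norm_map_le_one_add_mul (hT : ∀ x ∈ E, ‖x - T x‖ ≤ ε * ‖x‖) {x : B} (hx : x ∈ E) :
    ‖T x‖ ≤ (1 + ε) * ‖x‖ := by
  have := norm_sub_norm_le (T x) x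
  rw [norm_sub_rev] at this
  linarith [hT x hx]

theorem sum_smul_normalizedImage (T : B →ₗ[ℝ] B) (v : Fin k → B) (a : Fin k → ℝ) :
    ∑ i, a i • normalizedImage T v i = T (∑ i, (a i / ‖T (v i)‖) • v i) := by
  simp [normalizedImage, smul_smul, div_eq_mul_inv]

variable {v : Fin k → B}

theorem linearIndependent_map_of_near (hT : ∀ x ∈ E, ‖x - T x‖ ≤ ε * ‖x‖) (hε : ε < 1)
    (hvE : ∀ i, v i ∈ E) (hv : LinearIndependent ℝ v) : LinearIndependent ℝ (T ∘ v) := by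
  refine hv.map (Submodule.disjoint_def.mpr fun x hx hTx => ?_)
  have hxE : x ∈ E := Submodule.span_le.mpr (range_subset_iff.mpr hvE) hx
  have := one_sub_mul_norm_le_norm_map hT hxE
  rw [LinearMap.mem_ker.mp hTx, norm_zero] at this
  exact norm_le_zero_iff.mp (nonpos_of_mul_nonpos_right this (sub_pos.mpr hε))

theorem norm_map_pos (hT : ∀ x ∈ E, ‖x - T x‖ ≤ ε * ‖x‖) (hε : ε < 1) (hvE : ∀ i, v i ∈ E)
    (hv : LinearIndependent ℝ v) (i : Fin k) : 0 < ‖T (v i)‖ :=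
  norm_pos_iff.mpr ((linearIndependent_map_of_near hT hε hvE hv).ne_zero i)

theorem linearIndependent_normalizedImage (hT : ∀ x ∈ E, ‖x - T x‖ ≤ ε * ‖x‖) (hε : ε < 1)
    (hvE : ∀ i, v i ∈ E) (hv : LinearIndependent ℝ v) :
    LinearIndependent ℝ (normalizedImage T v) :=
  (linearIndependent_map_of_near hT hε hvE hv).units_smul
    fun i => Units.mk0 _ (inv_ne_zero (norm_map_pos hT hε hvE hv i).ne')

theorem sSup_coordProjNorms_normalizedImage_le (hT : ∀ x ∈ E, ‖x - T x‖ ≤ ε * ‖x‖)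
    (hε : ε < 1) (hvE : ∀ i, v i ∈ E) (hv : LinearIndependent ℝ v) (i : Fin k) :
    sSup (coordProjNorms (normalizedImage T v) i) ≤
      (1 + ε) / (1 - ε) * sSup (coordProjNorms v i) := by
  have h1ε : 0 < 1 - ε := sub_pos.mpr hε
  have hn : 0 < ‖T (v i)‖ := norm_map_pos hT hε hvE hv i
  have hvi : ‖T (v i)‖ ≤ (1 + ε) * ‖v i‖ := norm_map_le_one_add_mul hT (hvE i)
  have hq : 0 ≤ (1 + ε) / (1 - ε) := by
    refine div_nonneg ?_ h1ε.le
    exact nonneg_of_mul_nonneg_left (hn.le.trans hvi) (norm_pos_iff.mpr (hv.ne_zero i))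
  refine Real.sSup_le ?_ (mul_nonneg hq
    (Real.sSup_nonneg fun r ⟨_, _, hr⟩ => hr ▸ norm_nonneg _))
  rintro - ⟨a, ha, rfl⟩
  set x := ∑ j, (a j / ‖T (v j)‖) • v j
  have hxE : x ∈ E := E.sum_mem fun j _ => E.smul_mem _ (hvE j)
  have hx : (1 - ε) * ‖x‖ ≤ 1 := by
    rw [sum_smul_normalizedImage] at ha
    exact (one_sub_mul_norm_le_norm_map hT hxE).trans ha
  set b : Fin k → ℝ := fun j => (1 - ε) * (a j / ‖T (v j)‖)
  have hb : ‖b i • v i‖ ∈ coordProjNorms v i := by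
    refine ⟨b, ?_, rfl⟩
    simpa [b, ← smul_smul, ← Finset.smul_sum, norm_smul, abs_of_pos h1ε] using hx
  calc ‖a i • normalizedImage T v i‖ = |a i| := by
        simp [normalizedImage, norm_smul, hn.ne']
    _ ≤ |a i| * ((1 + ε) * ‖v i‖ / ‖T (v i)‖) := by
        refine le_mul_of_one_le_right (abs_nonneg _) ?_
        rwa [one_le_div hn]
    _ = (1 + ε) / (1 - ε) * ‖b i • v i‖ := by
        simp only [b, norm_smul, Real.norm_eq_abs, abs_mul, abs_div, abs_of_pos h1ε, abs_norm]
        field_simp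
    _ ≤ _ := by gcongr; exact le_csSup (bddAbove_coordProjNorms hv i) hb

theorem Nquan_normalizedImage_le (hT : ∀ x ∈ E, ‖x - T x‖ ≤ ε * ‖x‖)
    (hε : ε < 1) (hvE : ∀ i, v i ∈ E) (hv : LinearIndependent ℝ v) :
    Nquan (normalizedImage T v) ≤ (1 + ε) / (1 - ε) * Nquan v := by
  rw [Nquan_eq_sum, Nquan_eq_sum, Finset.mul_sum]
  exact Finset.sum_le_sum fun i _ => sSup_coordProjNorms_normalizedImage_le hT hε hvE hv i

theorem Nquan_normalizedImage_le_two_mul (hT : ∀ x ∈ E, ‖x - T x‖ ≤ ε * ‖x‖)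
    (hε : ε ≤ 1 / 3) (hvE : ∀ i, v i ∈ E) (hv : LinearIndependent ℝ v) :
    Nquan (normalizedImage T v) ≤ 2 * k * Nquan v := by
  have h1ε : 0 < 1 - ε := by linarith
  calc Nquan (normalizedImage T v) ≤ (1 + ε) / (1 - ε) * Nquan v :=
        Nquan_normalizedImage_le hT (by linarith) hvE hv
    _ ≤ 2 * Nquan v := by
        gcongr
        · exact Nquan_nonneg v
        · rw [div_le_iff₀ h1ε]; linarith
    _ ≤ 2 * k * Nquan v := by
        rcases k.eq_zero_or_pos with rfl | hk
        · simp [Nquan]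
        · nlinarith [Nquan_nonneg v, (Nat.one_le_cast.mpr hk : (1 : ℝ) ≤ k)]

theorem prod_norm_map_mem_Icc (hT : ∀ x ∈ E, ‖x - T x‖ ≤ ε * ‖x‖) (hε : ε ≤ 1)
    (hvE : ∀ i, v i ∈ E) (hv1 : ∀ i, ‖v i‖ = 1) :
    ∏ i, ‖T (v i)‖ ∈ Icc ((1 - ε) ^ k) ((1 + ε) ^ k) := by
  have hn (i : Fin k) : 1 - ε ≤ ‖T (v i)‖ ∧ ‖T (v i)‖ ≤ 1 + ε := by
    simpa [hv1] using And.intro (one_sub_mul_norm_le_norm_map hT (hvE i))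
      (norm_map_le_one_add_mul hT (hvE i))
  constructor
  · simpa using Finset.prod_le_prod (s := .univ) (fun _ _ => sub_nonneg.mpr hε) fun i _ => (hn i).1
  · simpa using Finset.prod_le_prod (s := .univ) (fun _ _ => norm_nonneg _) fun i _ => (hn i).2

theorem abs_log_volume_coordBall_normalizedImage_le (hT : ∀ x ∈ E, ‖x - T x‖ ≤ ε * ‖x‖)
    (hε0 : 0 ≤ ε) (hε : ε < 1) (hvE : ∀ i, v i ∈ E) (hv : LinearIndependent ℝ v)
    (hv1 : ∀ i, ‖v i‖ = 1) :
    |Real.log (volume.real (coordBall (normalizedImage T v)) / volume.real (coordBall v))| ≤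
      k * Real.log ((1 + ε) / (1 - ε)) := by
  have h1ε : 0 < 1 - ε := sub_pos.mpr hε
  have h1ε' : 0 < 1 + ε := by linarith
  have hTv := linearIndependent_map_of_near hT hε hvE hv
  have hsum (a : Fin k → ℝ) : ∑ i, a i • (T ∘ v) i = T (∑ i, a i • v i) := by simp
  have hsumE (a : Fin k → ℝ) : ∑ i, a i • v i ∈ E := E.sum_mem fun j _ => E.smul_mem _ (hvE j)
  have hV' := volume_real_coordBall_normalizedImage hTv.ne_zero
  have hVu : volume.real (coordBall (T ∘ v)) ≤ (1 - ε)⁻¹ ^ k * volume.real (coordBall v) :=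
    volume_real_coordBall_le hv h1ε fun a => by
      rw [hsum]; exact one_sub_mul_norm_le_norm_map hT (hsumE a)
  have hVv : volume.real (coordBall v) ≤ (1 + ε) ^ k * volume.real (coordBall (T ∘ v)) := by
    simpa using volume_real_coordBall_le hTv (inv_pos.mpr h1ε') fun a => by
      rw [hsum, inv_mul_le_iff₀ h1ε']; exact norm_map_le_one_add_mul hT (hsumE a)
  obtain ⟨hprod_lo, hprod_hi⟩ := prod_norm_map_mem_Icc hT hε.le hvE hv1
  refine Real.abs_log_div_le_of_le_of_le (volume_real_coordBall_pos hv) (div_pos h1ε' h1ε) ?_ ?_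
  · calc (((1 + ε) / (1 - ε)) ^ k)⁻¹ * volume.real (coordBall v)
        ≤ (((1 + ε) / (1 - ε)) ^ k)⁻¹ * ((1 + ε) ^ k * volume.real (coordBall (T ∘ v))) := by
          gcongr
      _ = (1 - ε) ^ k * volume.real (coordBall (T ∘ v)) := by
          rw [div_pow]; field_simp
      _ ≤ _ := by rw [hV']; gcongr
  · calc volume.real (coordBall (normalizedImage T v))
        ≤ (1 + ε) ^ k * ((1 - ε)⁻¹ ^ k * volume.real (coordBall v)) := by
          rw [hV']; gcongr
      _ = ((1 + ε) / (1 - ε)) ^ k * volume.real (coordBall v) := by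
          rw [div_pow, inv_pow]; ring

end NearIdentity

end BY

theorem statement9_general {B : Type*} [NormedAddCommGroup B] [NormedSpace ℝ B]
    [MeasurableSpace B] [BorelSpace B] (k : ℕ) :
    ∃ δ₁ > (0 : ℝ), ∃ L₁ > (0 : ℝ),
      ∀ (E E' F : Submodule ℝ B)
        [FiniteDimensional ℝ E] [FiniteDimensional ℝ E'],
        Module.finrank ℝ E = k → Module.finrank ℝ E' = k →
        IsClosed (F : Set B) →
        BY.dH E E' ≤ δ₁ →
        ∀ h : IsCompl E F, BY.projNorm E F h ≤ Real.sqrt k →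
        ∀ h' : IsCompl E' F,
        ∀ v : Fin k → B,
          (∀ i, v i ∈ E) → (∀ i, ‖v i‖ = 1) → LinearIndependent ℝ v →
          Submodule.span ℝ (Set.range v) = E →
        ∀ v' : Fin k → B,
          (∀ i, v' i =
            ‖(E'.linearProjOfIsCompl F h' (v i) : B)‖⁻¹ •
              ((E'.linearProjOfIsCompl F h' (v i) : B))) →
        ∀ (μE : MeasureTheory.Measure E) (μE' : MeasureTheory.Measure E'),
          BY.IsInducedVolume E k μE → BY.IsInducedVolume E' k μE' →
          BY.Nquan v' ≤ 2 * k * BY.Nquan v ∧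
          |Real.log ((μE (Subtype.val ⁻¹' BY.pped v)).toReal /
              (μE' (Subtype.val ⁻¹' BY.pped v')).toReal)| ≤
            L₁ * BY.dH E E' := by
  open BY in
  refine ⟨(3 * (1 + 2 * √k))⁻¹, by positivity, 3 * (k + 1) * (1 + 2 * √k), by positivity, ?_⟩
  intro E E' F _ _ hE hE' hF hd h hπ h' v hvE hv1 hv _ v' hv' μ μ' hμ hμ'
  have hε : (1 + 2 * √k) * dH E E' ≤ 1 / 3 :=
    calc (1 + 2 * √k) * dH E E' ≤ (1 + 2 * √k) * (3 * (1 + 2 * √k))⁻¹ := by gcongr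
      _ = 1 / 3 := by field_simp
  have hT : ∀ x ∈ E, ‖x - E'.projection F h' x‖ ≤ (1 + 2 * √k) * dH E E' * ‖x‖ := fun x hx =>
    norm_sub_projection_le_of_projNorm_le (hE.trans hE'.symm) hF h h' hπ
      (by nlinarith [Real.sqrt_nonneg k, dH_nonneg E E']) hx
  set ε := (1 + 2 * √k) * dH E E'
  have hε0 : 0 ≤ ε := mul_nonneg (by positivity) (dH_nonneg E E')
  obtain rfl : v' = normalizedImage (E'.projection F h') v := funext hv'
  refine ⟨Nquan_normalizedImage_le_two_mul hT hε hvE hv, ?_⟩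
  have hv'E (i : Fin k) : normalizedImage (E'.projection F h') v i ∈ E' :=
    E'.smul_mem _ (projection_apply_mem h' (v i))
  rw [toReal_measure_pped_div hE hE' hμ hμ' hvE hv'E hv
    (linearIndependent_normalizedImage hT (by linarith) hvE hv)]
  calc _ ≤ k * Real.log ((1 + ε) / (1 - ε)) :=
        abs_log_volume_coordBall_normalizedImage_le hT hε0 (by linarith) hvE hv hv1
    _ ≤ k * (3 * ε) := by gcongr; exact Real.log_one_add_div_one_sub_le hε0 hε
    _ ≤ 3 * (k + 1) * (1 + 2 * √k) * dH E E' := by nlinarith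

/-- Lemma 2.12 of the paper. For any `k ≥ 1` there exist `δ₁ > 0` and
`L₁ > 0`, depending only on `k`, such that: if `E, E'` are `k`-dimensional subspaces with
`d_H(E, E') ≤ δ₁`, `F` is a closed complement of `E` with `|π_{E⊕F}| ≤ √k`,
`{vᵢ}` is a basis of unit vectors of `E`, `B = E' ⊕ F`, and
`v'ᵢ = π_{E'⊕F} vᵢ / |π_{E'⊕F} vᵢ|`, then (1) `N[v'₁,…,v'_k] ≤ 2k N[v₁,…,v_k]` and
(2) `|log (m_E P[v₁,…,v_k] / m_{E'} P[v'₁,…,v'_k])| ≤ L₁ d_H(E, E')`. -/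
theorem statement9 {B : Type*} [NormedAddCommGroup B] [NormedSpace ℝ B] [CompleteSpace B]
    [MeasurableSpace B] [BorelSpace B] (k : ℕ) (hk : 1 ≤ k) :
    ∃ δ₁ > (0 : ℝ), ∃ L₁ > (0 : ℝ),
      ∀ (E E' F : Submodule ℝ B)
        [FiniteDimensional ℝ E] [FiniteDimensional ℝ E'],
        Module.finrank ℝ E = k → Module.finrank ℝ E' = k →
        IsClosed (F : Set B) →
        BY.dH E E' ≤ δ₁ →
        ∀ h : IsCompl E F, BY.projNorm E F h ≤ Real.sqrt k →
        ∀ h' : IsCompl E' F,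
        ∀ v : Fin k → B,
          (∀ i, v i ∈ E) → (∀ i, ‖v i‖ = 1) → LinearIndependent ℝ v →
          Submodule.span ℝ (Set.range v) = E →
        ∀ v' : Fin k → B,
          (∀ i, v' i =
            ‖(E'.linearProjOfIsCompl F h' (v i) : B)‖⁻¹ •
              ((E'.linearProjOfIsCompl F h' (v i) : B))) →
        ∀ (μE : MeasureTheory.Measure E) (μE' : MeasureTheory.Measure E'),
          BY.IsInducedVolume E k μE → BY.IsInducedVolume E' k μE' →
          BY.Nquan v' ≤ 2 * k * BY.Nquan v ∧
          |Real.log ((μE (Subtype.val ⁻¹' BY.pped v)).toReal /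
              (μE' (Subtype.val ⁻¹' BY.pped v')).toReal)| ≤
            L₁ * BY.dH E E' :=
  statement9_general k
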